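/- For any positive integers L, y, z with y odd and y > 1, setting m = 2(y−1)z, every coefficient in the power series expansion of 1/((q^z; q^m)_{L+1} (q^{m+2z}; q^{2m})_L) − 1/((q^{yz}; q^m)_L (q^{2z}; q^{2m})_{L+1}) is nonnegative. -/

import Mathlib

open Finset PowerSeries

/-- `(q^c; q^m)_L = ∏_{j=0}^{L-1} (1 - q^{c+jm})` as a formal power series over `ℚ`. -/
noncomputable def qp (c m L : ℕ) : PowerSeries ℚ :=
  ∏ j ∈ Finset.range L, (1 - (PowerSeries.X : PowerSeries ℚ) ^ (c + j * m))

/-!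
Multiplying `(q^c; q^m)_L` by `(-q^c; q^m)_L` gives `(q^{2c}; q^{2m})_L`. Since `2yz = m + 2z`,
both reciprocals therefore become `R · D⁻¹` with the same
`D = (q^{2z}; q^{2m})_{L+1} (q^{2yz}; q^{2m})_L` and numerators `(-q^z; q^m)_{L+1}`,
`(-q^{yz}; q^m)_L`. Their difference is `q^{z+Lm} (-q^z; q^m)_L` plus
`(-q^z; q^m)_L - (-q^{z+a}; q^m)_L` with `a = (y-1)z`, and the latter is `1 - q^{2z}` times a
series with nonnegative coefficients because `2z ∣ a` when `y` is odd. The factor `1 - q^{2z}`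
cancels against `D`, and reciprocals of products of factors `1 - q^p` have nonnegative
coefficients.
-/

namespace PowerSeries

section OrderedSemiring

variable (R : Type*) [Semiring R] [PartialOrder R] [IsOrderedRing R]

def nonnegCoeffs : Subsemiring R⟦X⟧ where
  carrier := {f | ∀ n, 0 ≤ coeff n f}
  mul_mem' {f g} hf hg n := by
    rw [coeff_mul]
    exact sum_nonneg fun p _ => mul_nonneg (hf p.1) (hg p.2)
  one_mem' n := by
    rw [coeff_one]
    split_ifs <;> simp
  add_mem' {f g} hf hg n := by
    rw [map_add]
    exact add_nonneg (hf n) (hg n)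
  zero_mem' n := by simp

variable {R}

theorem mem_nonnegCoeffs {f : R⟦X⟧} : f ∈ nonnegCoeffs R ↔ ∀ n, 0 ≤ coeff n f := Iff.rfl

theorem X_pow_mem_nonnegCoeffs (p : ℕ) : (X : R⟦X⟧) ^ p ∈ nonnegCoeffs R :=
  pow_mem (fun n => by rw [coeff_X]; split_ifs <;> simp) p

end OrderedSemiring

theorem exists_one_sub_X_pow_eq_mul {R : Type*} [Ring R] [PartialOrder R] [IsOrderedRing R]
    {a b : ℕ} (hba : b ∣ a) :
    ∃ G ∈ nonnegCoeffs R, (1 : R⟦X⟧) - X ^ a = (1 - X ^ b) * G := by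
  obtain ⟨n, rfl⟩ := hba
  refine ⟨∑ i ∈ range n, (X ^ b) ^ i,
    sum_mem fun i _ => pow_mem (X_pow_mem_nonnegCoeffs b) i, ?_⟩
  rw [mul_neg_geom_sum, pow_mul]

section Field

variable {k : Type*} [Field k]

theorem inv_eq_mul_inv_of_mul_eq {A R D : k⟦X⟧} (hD : constantCoeff D ≠ 0) (hA : A * R = D) :
    A⁻¹ = R * D⁻¹ := by
  have hAR : R * D⁻¹ * A = 1 := by
    rw [mul_comm, ← mul_assoc, hA, PowerSeries.mul_inv_cancel _ hD]
  have hA0 : constantCoeff A ≠ 0 :=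
    right_ne_zero_of_mul_eq_one (by simpa using congrArg constantCoeff hAR)
  exact (inv_eq_iff_mul_eq_one hA0).2 hAR

variable [LinearOrder k] [IsStrictOrderedRing k]

theorem inv_one_sub_X_pow_mem_nonnegCoeffs {p : ℕ} (hp : 0 < p) :
    (1 - X ^ p : k⟦X⟧)⁻¹ ∈ nonnegCoeffs k := by
  set f := (1 - X ^ p : k⟦X⟧)⁻¹
  -- `coeff n f = [n = 0] + coeff (n - p) f` for `p ≤ n`: a recursion since `0 < p`
  have hf : f = 1 + X ^ p * f := by
    have : (1 - X ^ p : k⟦X⟧) * f = 1 :=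
      PowerSeries.mul_inv_cancel _ (by simp [zero_pow hp.ne'])
    linear_combination this
  intro n
  induction n using Nat.strong_induction_on with
  | _ n ih =>
    rw [hf, map_add, coeff_X_pow_mul']
    refine add_nonneg ((nonnegCoeffs k).one_mem n) ?_
    split_ifs with hpn
    · exact ih _ (by omega)
    · exact le_rfl

end Field

end PowerSeries

/-- `(-q^c; q^m)_L`. -/
noncomputable def qpNeg (c m L : ℕ) : ℚ⟦X⟧ :=
  ∏ j ∈ range L, (1 + X ^ (c + j * m))

theorem qp_succ (c m L : ℕ) : qp c m (L + 1) = qp c m L * (1 - X ^ (c + L * m)) :=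
  prod_range_succ _ _

theorem qp_succ' (c m L : ℕ) : qp c m (L + 1) = (1 - X ^ c) * qp (c + m) m L := by
  rw [qp, prod_range_succ', mul_comm, qp]
  simp only [zero_mul, add_zero, add_mul, one_mul, add_assoc, add_comm m]

theorem qpNeg_succ (c m L : ℕ) : qpNeg c m (L + 1) = qpNeg c m L * (1 + X ^ (c + L * m)) :=
  prod_range_succ _ _

theorem qp_mul_qpNeg (c m L : ℕ) : qp c m L * qpNeg c m L = qp (2 * c) (2 * m) L := by
  rw [qp, qpNeg, qp, ← prod_mul_distrib]
  refine prod_congr rfl fun j _ => ?_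
  rw [show 2 * c + j * (2 * m) = (c + j * m) * 2 by ring, pow_mul]
  ring

theorem constantCoeff_qp {c : ℕ} (hc : 0 < c) (m L : ℕ) : constantCoeff (qp c m L) = 1 := by
  rw [qp, map_prod]
  exact prod_eq_one fun j _ => by simp [zero_pow (by positivity : c + j * m ≠ 0)]

theorem inv_qp_mem_nonnegCoeffs {c : ℕ} (hc : 0 < c) (m L : ℕ) :
    (qp c m L)⁻¹ ∈ nonnegCoeffs ℚ := by
  induction L with
  | zero => simp [qp]
  | succ L ih =>
    rw [qp_succ, PowerSeries.mul_inv_rev]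
    exact mul_mem (inv_one_sub_X_pow_mem_nonnegCoeffs (by positivity)) ih

theorem inv_qp_mul_qp_mem_nonnegCoeffs {c c' m m' L L' : ℕ} (hc : 0 < c) (hc' : 0 < c') :
    (qp c m L * qp c' m' L')⁻¹ ∈ nonnegCoeffs ℚ := by
  rw [PowerSeries.mul_inv_rev]
  exact mul_mem (inv_qp_mem_nonnegCoeffs hc' _ _) (inv_qp_mem_nonnegCoeffs hc _ _)

theorem qpNeg_mem_nonnegCoeffs (c m L : ℕ) : qpNeg c m L ∈ nonnegCoeffs ℚ :=
  prod_mem fun _ _ => add_mem (one_mem _) (X_pow_mem_nonnegCoeffs _)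

theorem exists_qpNeg_sub_qpNeg_eq_mul (c m L : ℕ) {a b : ℕ} (hba : b ∣ a) :
    ∃ S ∈ nonnegCoeffs ℚ, qpNeg c m L - qpNeg (c + a) m L = (1 - X ^ b) * S := by
  obtain ⟨G, hG, hGeq⟩ := exists_one_sub_X_pow_eq_mul (R := ℚ) hba
  induction L with
  | zero => exact ⟨0, zero_mem _, by simp [qpNeg]⟩
  | succ L ih =>
    obtain ⟨S, hS, hSeq⟩ := ih
    refine ⟨S * (1 + X ^ (c + L * m)) + qpNeg (c + a) m L * X ^ (c + L * m) * G,
      add_mem (mul_mem hS (add_mem (one_mem _) (X_pow_mem_nonnegCoeffs _)))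
        (mul_mem (mul_mem (qpNeg_mem_nonnegCoeffs _ _ _) (X_pow_mem_nonnegCoeffs _)) hG), ?_⟩
    rw [qpNeg_succ, qpNeg_succ, add_right_comm c a, pow_add]
    linear_combination (1 + X ^ (c + L * m)) * hSeq
      + qpNeg (c + a) m L * X ^ (c + L * m) * hGeq

theorem lectureHall_inv_sub_inv_mem_nonnegCoeffs {c a : ℕ} (hc : 0 < c) (hca : 2 * c ∣ a)
    (m L : ℕ) :
    (qp c m (L + 1) * qp (2 * (c + a)) (2 * m) L)⁻¹
      - (qp (c + a) m L * qp (2 * c) (2 * m) (L + 1))⁻¹ ∈ nonnegCoeffs ℚ := by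
  set E := qp (2 * c + 2 * m) (2 * m) L * qp (2 * (c + a)) (2 * m) L
  set D := qp (2 * c) (2 * m) (L + 1) * qp (2 * (c + a)) (2 * m) L
  have hD : D = (1 - X ^ (2 * c)) * E := by simp only [D, E]; rw [qp_succ', mul_assoc]
  have hD0 : constantCoeff D ≠ 0 := by simp [D, constantCoeff_qp, hc]
  have hDE : (1 - X ^ (2 * c)) * D⁻¹ = E⁻¹ := by
    rw [hD, PowerSeries.mul_inv_rev, mul_left_comm,
      PowerSeries.mul_inv_cancel _ (by simp [zero_pow (by positivity : 2 * c ≠ 0)]), mul_one]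
  have hA : qp c m (L + 1) * qp (2 * (c + a)) (2 * m) L * qpNeg c m (L + 1) = D := by
    rw [mul_right_comm, qp_mul_qpNeg]
  have hB : qp (c + a) m L * qp (2 * c) (2 * m) (L + 1) * qpNeg (c + a) m L = D := by
    rw [mul_right_comm, qp_mul_qpNeg, mul_comm]
  obtain ⟨S, hS, hSeq⟩ := exists_qpNeg_sub_qpNeg_eq_mul c m L hca
  have hsplit : (qpNeg c m (L + 1) - qpNeg (c + a) m L) * D⁻¹
      = X ^ (c + L * m) * qpNeg c m L * D⁻¹ + S * E⁻¹ := by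
    rw [← hDE, qpNeg_succ]
    linear_combination D⁻¹ * hSeq
  rw [inv_eq_mul_inv_of_mul_eq hD0 hA, inv_eq_mul_inv_of_mul_eq hD0 hB, ← sub_mul, hsplit]
  have hDinv : D⁻¹ ∈ nonnegCoeffs ℚ :=
    inv_qp_mul_qp_mem_nonnegCoeffs (by positivity) (by positivity)
  have hEinv : E⁻¹ ∈ nonnegCoeffs ℚ :=
    inv_qp_mul_qp_mem_nonnegCoeffs (by positivity) (by positivity)
  exact add_mem
    (mul_mem (mul_mem (X_pow_mem_nonnegCoeffs _) (qpNeg_mem_nonnegCoeffs _ _ _)) hDinv)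
    (mul_mem hS hEinv)

theorem lecture_hall_odd_general (L y z m : ℕ) (hodd : Odd y)
    (hz : 0 < z) (hm : m = 2 * (y - 1) * z) (x : ℕ) :
    0 ≤ PowerSeries.coeff (R := ℚ) x
      ((qp z m (L + 1) * qp (m + 2 * z) (2 * m) L)⁻¹
        - (qp (y * z) m L * qp (2 * z) (2 * m) (L + 1))⁻¹) := by
  obtain ⟨k, rfl⟩ := hodd
  have hyz : (2 * k + 1) * z = z + 2 * k * z := by ring
  have hmz : m + 2 * z = 2 * (z + 2 * k * z) := by
    rw [hm, add_tsub_cancel_right]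
    ring
  rw [hyz, hmz]
  exact mem_nonnegCoeffs.1 (lectureHall_inv_sub_inv_mem_nonnegCoeffs hz ⟨k, by ring⟩ m L) x

theorem lecture_hall_odd (L y z m : ℕ) (hL : 0 < L) (hy : 1 < y) (hodd : Odd y)
    (hz : 0 < z) (hm : m = 2 * (y - 1) * z) (x : ℕ) :
    0 ≤ PowerSeries.coeff (R := ℚ) x
      ((qp z m (L + 1) * qp (m + 2 * z) (2 * m) L)⁻¹
        - (qp (y * z) m L * qp (2 * z) (2 * m) (L + 1))⁻¹) :=
  lecture_hall_odd_general L y z m hodd hz hm x
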